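/- arXiv:1508.02144 — 6 statements merged into one kernel-verified Lean document; each statement's English description precedes it below -/
import Mathlib

section
/- Let 0 < q < 1, t ∈ ℂ with Re(t) > 0, and k_1,...,k_n ∈ ℤ with k_1 ≠ 0. Then the nested series Σ_{m_1 > m_2 > ... > m_n > 0} q^{(|k_1|m_1 + ... + |k_n|m_n)t} / ((1-q^{m_1})^{k_1} ⋯ (1-q^{m_n})^{k_n}) converges absolutely. -/
/-!
Write `a = Re(t) log q < 0`. The denominator `∏ (1 - q^{mⱼ})^{kⱼ}` is bounded below by a
positive constant, since `1 - q ≤ 1 - q^{mⱼ} ≤ 1`. In the numerator `|k₁| ≥ 1` and `m₁` is the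
largest index, so `|k₁|m₁ + ⋯ + |kₙ|mₙ ≥ m₁ ≥ (m₁ + ⋯ + mₙ)/n`, and the modulus of the numerator
is at most `∏ⱼ (e^{a/n})^{mⱼ}`. This product of geometric sequences is summable over all of `ℕⁿ`.
-/

theorem summable_fin_prod_of_nonneg {β : Type*} {f : β → ℝ} (hf0 : 0 ≤ f) (hf : Summable f) :
    ∀ n : ℕ, Summable fun v : Fin n → β => ∏ i, f (v i)
  | 0 => .of_finite
  | n + 1 => by
    have hprod := hf.mul_of_nonneg (summable_fin_prod_of_nonneg hf0 hf n) hf0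
      fun v => Finset.prod_nonneg fun i _ => hf0 (v i)
    refine (hprod.comp_injective (Fin.consEquiv fun _ => β).symm.injective).congr fun v => ?_
    simp [Fin.consEquiv, Fin.prod_univ_succ, Fin.tail]

theorem min_one_zpow_le_zpow {K : Type*} [Field K] [LinearOrder K] [IsStrictOrderedRing K]
    {a x : K} (ha : 0 < a) (hax : a ≤ x) (hx : x ≤ 1) (k : ℤ) :
    min 1 (a ^ k) ≤ x ^ k := by
  rcases le_or_gt 0 k with hk | hk
  · exact (min_le_right _ _).trans (zpow_le_zpow_left₀ hk ha.le hax)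
  · exact (min_le_left _ _).trans (one_le_zpow_of_nonpos₀ (ha.trans_le hax) hx hk.le)

theorem sum_div_card_le_sum_abs_mul {n : ℕ} (hn : 0 < n) {m : Fin n → ℕ} (hm : Antitone m)
    {k : Fin n → ℤ} (hk : k ⟨0, hn⟩ ≠ 0) :
    (∑ i, (m i : ℝ)) / n ≤ ∑ i, (|k i| : ℝ) * m i := by
  set i₀ : Fin n := ⟨0, hn⟩
  have hsum : ∑ i, (m i : ℝ) ≤ n * m i₀ := by
    simpa using Finset.sum_le_card_nsmul Finset.univ (fun i => (m i : ℝ)) (m i₀)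
      fun i _ => by exact_mod_cast hm (Fin.mk_le_of_le_val (Nat.zero_le _))
  have hk₀ : (1 : ℝ) ≤ |(k i₀ : ℝ)| := by exact_mod_cast Int.one_le_abs hk
  rw [div_le_iff₀ (by exact_mod_cast hn)]
  calc ∑ i, (m i : ℝ) ≤ n * m i₀ := hsum
    _ ≤ n * (|(k i₀ : ℝ)| * m i₀) := by gcongr; exact le_mul_of_one_le_left (by positivity) hk₀
    _ ≤ n * ∑ i, (|k i| : ℝ) * m i := by
      gcongr
      exact Finset.single_le_sum (f := fun i => (|k i| : ℝ) * m i) (fun i _ => by positivity)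
        (Finset.mem_univ i₀)
    _ = (∑ i, (|k i| : ℝ) * m i) * n := mul_comm _ _

theorem Real.exp_sum_mul_eq_prod_pow {ι : Type*} [Fintype ι] (m : ι → ℕ) (b : ℝ) :
    Real.exp ((∑ i, (m i : ℝ)) * b) = ∏ i, Real.exp b ^ m i := by
  simp [Finset.sum_mul, Real.exp_sum, ← Real.exp_nat_mul]

theorem norm_exp_ofReal_mul_mul_log (x : ℝ) (t : ℂ) (q : ℝ) :
    ‖Complex.exp ((x : ℂ) * t * Real.log q)‖ = Real.exp (x * (t.re * Real.log q)) := by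
  rw [Complex.norm_exp]
  simp [mul_assoc]

theorem norm_prod_ofReal_zpow {ι : Type*} [Fintype ι] {x : ι → ℝ} (hx : ∀ i, 0 < x i)
    (k : ι → ℤ) : ‖∏ i, ((x i : ℝ) : ℂ) ^ k i‖ = ∏ i, x i ^ k i := by
  simp [norm_prod, norm_zpow, abs_of_pos (hx _)]

/-- Absolute convergence of the modified `q`-multiple zeta series
`∑_{m₁>⋯>mₙ>0} q^{(|k₁|m₁+⋯+|kₙ|mₙ)t} / ∏ⱼ (1-q^{mⱼ})^{kⱼ}`
for `0 < q < 1`, `Re t > 0` and integer exponents with `k₁ ≠ 0`. -/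
theorem qMZV_abs_convergent (q : ℝ) (hq0 : 0 < q) (hq1 : q < 1)
    (t : ℂ) (ht : 0 < t.re) (n : ℕ) (hn : 0 < n) (k : Fin n → ℤ)
    (hk : k ⟨0, hn⟩ ≠ 0) :
    Summable (fun m : {m : Fin n → ℕ //
        (∀ i j : Fin n, i < j → m j < m i) ∧ ∀ i, 0 < m i} =>
      ‖Complex.exp (((∑ i, (|k i| : ℝ) * (m.1 i : ℝ)) : ℂ) * t * Real.log q) /
        ∏ i, ((1 - q ^ (m.1 i) : ℝ) : ℂ) ^ (k i)‖) := by
  set a := t.re * Real.log q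
  have ha : a < 0 := mul_neg_of_pos_of_neg ht (Real.log_neg hq0 hq1)
  set s := Real.exp (a / n)
  have hs : s < 1 := Real.exp_lt_one_iff.mpr (div_neg_of_neg_of_pos ha (by exact_mod_cast hn))
  set c := ∏ i, min 1 ((1 - q) ^ k i)
  have hc_factor : ∀ i, 0 < min 1 ((1 - q) ^ k i) :=
    fun i => lt_min one_pos (zpow_pos (by linarith) _)
  have hc : 0 < c := Finset.prod_pos fun i _ => hc_factor i
  have hmajorant := (summable_fin_prod_of_nonneg (fun _ => by positivity)
    (summable_geometric_of_lt_one (Real.exp_pos _).le hs) n).mul_left c⁻¹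
  refine Summable.of_nonneg_of_le (fun _ => norm_nonneg _) (fun ⟨m, hdec, hpos⟩ => ?_)
    (hmajorant.subtype _)
  have hqm : ∀ i, q ^ m i ≤ q := fun i => pow_le_of_le_one hq0.le hq1.le (hpos i).ne'
  have hqm_pos : ∀ i, 0 < q ^ m i := fun i => pow_pos hq0 (m i)
  have hden : c ≤ ∏ i, (1 - q ^ m i) ^ k i :=
    Finset.prod_le_prod (fun i _ => (hc_factor i).le) fun i _ =>
      min_one_zpow_le_zpow (by linarith) (by linarith [hqm i]) (by linarith [hqm_pos i]) (k i)
  have hnum : Real.exp ((∑ i, (|k i| : ℝ) * m i) * a) ≤ ∏ i, s ^ m i := by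
    rw [← Real.exp_sum_mul_eq_prod_pow, mul_div_assoc', ← div_mul_eq_mul_div, Real.exp_le_exp]
    exact mul_le_mul_of_nonpos_right
      (sum_div_card_le_sum_abs_mul hn (show StrictAnti m from hdec).antitone hk) ha.le
  have hnorm := norm_exp_ofReal_mul_mul_log (∑ i, (|k i| : ℝ) * m i) t q
  simp only [Complex.ofReal_sum, Complex.ofReal_mul] at hnorm
  dsimp only [Function.comp_apply]
  rw [norm_div, hnorm,
    norm_prod_ofReal_zpow fun i => by linarith [hqm i, hqm_pos i], ← div_eq_inv_mul]
  exact div_le_div₀ (by positivity) hnum hc hden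
end

section
/- Let k be a positive integer and x a formal variable. Then for 1 ≤ m ≤ k, the operator (x·d/dx) applied m-1 times to the polynomial (1+x)^k, evaluated at x = -1, equals 0; and (x·d/dx) applied k times to (1+x)^k, evaluated at x = -1, equals (-1)^k k!. -/
open Polynomial

private lemma xdx_pow (n : ℕ) :
    (X : Polynomial ℚ) * derivative (X ^ n) = (n : Polynomial ℚ) * X ^ n := by
  cases n with
  | zero => simp
  | succ m =>
    rw [derivative_X_pow]
    simp only [Nat.add_sub_cancel, Nat.cast_add, Nat.cast_one, map_add, map_one,
      C_eq_natCast]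
    ring

private lemma euler_key (k : ℕ) : ∀ j, j ≤ k → ∃ q : Polynomial ℚ,
    (fun p : Polynomial ℚ => X * derivative p)^[j] ((1 + X) ^ k) =
      ((Nat.descFactorial k j : ℕ) : Polynomial ℚ) * (X ^ j * (1 + X) ^ (k - j)) +
        (1 + X) ^ (k - j + 1) * q := by
  intro j
  induction j with
  | zero => intro _; exact ⟨0, by simp⟩
  | succ j ih =>
    intro hj
    obtain ⟨q, hq⟩ := ih (Nat.le_of_succ_le hj)
    set d := k - (j + 1) with hd
    have h1 : k - j = d + 1 := by omega
    refine ⟨((Nat.descFactorial k j : ℕ) : Polynomial ℚ) * (j : Polynomial ℚ) * X ^ j +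
        ((d : Polynomial ℚ) + 2) * X * q + (1 + X) * X * derivative q, ?_⟩
    rw [Function.iterate_succ_apply', hq, h1]
    have hc : ((Nat.descFactorial k (j + 1) : ℕ) : Polynomial ℚ) =
        ((d : Polynomial ℚ) + 1) * ((Nat.descFactorial k j : ℕ) : Polynomial ℚ) := by
      rw [Nat.descFactorial_succ, h1]
      push_cast
      ring
    have e1 : derivative ((1 + X) ^ (d + 1) : Polynomial ℚ) =
        ((d : Polynomial ℚ) + 1) * (1 + X) ^ d := by
      rw [derivative_pow]
      simp only [Nat.add_sub_cancel, derivative_add, derivative_one, derivative_X, zero_add,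
        mul_one, Nat.cast_add, Nat.cast_one, map_add, map_one, C_eq_natCast]
    have e2 : derivative ((1 + X) ^ (d + 1 + 1) : Polynomial ℚ) =
        ((d : Polynomial ℚ) + 2) * (1 + X) ^ (d + 1) := by
      rw [derivative_pow]
      simp only [Nat.add_sub_cancel, derivative_add, derivative_one, derivative_X, zero_add,
        mul_one, Nat.cast_add, Nat.cast_one, map_add, map_one, C_eq_natCast]
      ring
    have hder1 : (X : Polynomial ℚ) * derivative (X ^ j * (1 + X) ^ (d + 1)) =
        (j : Polynomial ℚ) * (X ^ j * (1 + X) ^ (d + 1)) +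
          ((d : Polynomial ℚ) + 1) * (X ^ (j + 1) * (1 + X) ^ d) := by
      rw [derivative_mul, e1, mul_add,
        show (X : Polynomial ℚ) * (derivative (X ^ j) * (1 + X) ^ (d + 1)) =
          (X * derivative (X ^ j)) * (1 + X) ^ (d + 1) by ring, xdx_pow]
      ring
    have hder2 : (X : Polynomial ℚ) * derivative ((1 + X) ^ (d + 1 + 1) * q) =
        (1 + X) ^ (d + 1) * (((d : Polynomial ℚ) + 2) * X * q + (1 + X) * X * derivative q) := by
      rw [derivative_mul, e2]
      ring
    have hlin : (X : Polynomial ℚ) * derivative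
          (((Nat.descFactorial k j : ℕ) : Polynomial ℚ) * (X ^ j * (1 + X) ^ (d + 1)) +
            (1 + X) ^ (d + 1 + 1) * q) =
        ((Nat.descFactorial k j : ℕ) : Polynomial ℚ) *
            ((X : Polynomial ℚ) * derivative (X ^ j * (1 + X) ^ (d + 1))) +
          (X : Polynomial ℚ) * derivative ((1 + X) ^ (d + 1 + 1) * q) := by
      rw [derivative_add, derivative_mul, derivative_natCast]
      ring
    show (X : Polynomial ℚ) * derivative _ = _
    rw [hlin, hder1, hder2, hc]
    ring

/-- Euler operator `p ↦ x p'` applied `m-1` times to `(1+x)^k` vanishes at `x = -1`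
for `1 ≤ m ≤ k`, and applied `k` times gives `(-1)^k k!` at `x = -1`. -/
theorem euler_op_eval (k : ℕ) (hk : 0 < k) :
    (∀ m : ℕ, 1 ≤ m → m ≤ k →
      Polynomial.eval (-1 : ℚ)
        ((fun p : Polynomial ℚ => X * derivative p)^[m - 1] ((1 + X) ^ k)) = 0) ∧
    Polynomial.eval (-1 : ℚ)
        ((fun p : Polynomial ℚ => X * derivative p)^[k] ((1 + X) ^ k)) =
      (-1) ^ k * (Nat.factorial k : ℚ) := by
  constructor
  · intro m hm1 hmk
    obtain ⟨q, hq⟩ := euler_key k (m - 1) (by omega)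
    rw [hq]
    have h1 : k - (m - 1) ≠ 0 := by omega
    simp [h1, zero_pow, show (1 : ℚ) + -1 = 0 by ring]
  · obtain ⟨q, hq⟩ := euler_key k k le_rfl
    rw [hq]
    simp [Nat.descFactorial_self, show (1 : ℚ) + -1 = 0 by ring, mul_comm]
end

section
/- Let 0 < q < 1 and let k_1,...,k_n be positive integers. Then Σ_{m_1>⋯>m_n>0} Π_{j=1}^n q^{k_j m_j t}(1-q^{m_j})^{k_j} = Σ_{l_1=0}^{k_1} ⋯ Σ_{l_n=0}^{k_n} Π_{j=1}^n C(k_j,l_j)(-1)^{l_j+1} q^{L_j}/(q^{L_j}-1), where L_j := (l_1 + k_1 t) + ⋯ + (l_j + k_j t), valid for every positive integer t. -/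
open Finset

theorem pi_tsum : ∀ (n : ℕ) (f : Fin n → ℕ → ℝ), (∀ j x, 0 ≤ f j x) →
    (∀ j, Summable (f j)) →
    Summable (fun d : Fin n → ℕ => ∏ j, f j (d j)) ∧
      (∑' d : Fin n → ℕ, ∏ j, f j (d j)) = ∏ j, ∑' x : ℕ, f j x := by
  intro n
  induction n with
  | zero =>
      intro f h0 hf
      haveI : Finite (Fin 0 → ℕ) := Finite.of_subsingleton
      constructor
      · exact Summable.of_finite
      · rw [tsum_eq_single (fun i => i.elim0)
          (fun b hb => absurd (Subsingleton.elim b _) hb)]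
        simp
  | succ n ih =>
      intro f h0 hf
      set e : ℕ × (Fin n → ℕ) ≃ (Fin (n + 1) → ℕ) := Fin.consEquiv (fun _ => ℕ) with he
      have key : ∀ p : ℕ × (Fin n → ℕ),
          (∏ j, f j (e p j)) = f 0 p.1 * ∏ j : Fin n, f j.succ (p.2 j) := by
        intro p
        rw [Fin.prod_univ_succ]
        simp [he, Fin.consEquiv]
      obtain ⟨hs, ht⟩ := ih (fun j => f j.succ) (fun j x => h0 _ _) (fun j => hf _)
      have hs2 : Summable (fun p : ℕ × (Fin n → ℕ) => f 0 p.1 * ∏ j : Fin n, f j.succ (p.2 j)) :=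
        Summable.mul_of_nonneg (f := f 0)
          (g := fun d : Fin n → ℕ => ∏ j : Fin n, f j.succ (d j)) (hf 0) hs (fun x => h0 _ _)
          (fun d => Finset.prod_nonneg fun j _ => h0 _ _)
      have hsum : Summable (fun d : Fin (n+1) → ℕ => ∏ j, f j (d j)) := by
        rw [← e.summable_iff]
        exact hs2.congr fun p => (key p).symm
      refine ⟨hsum, ?_⟩
      rw [← e.tsum_eq, tsum_congr key, Summable.tsum_prod' hs2 (fun b => hs.mul_left (f 0 b))]
      have : ∀ a : ℕ, ∑' b : Fin n → ℕ, f 0 a * ∏ j : Fin n, f j.succ (b j)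
          = f 0 a * ∏ j : Fin n, ∑' x : ℕ, f j.succ x := by
        intro a
        rw [tsum_mul_left, ht]
      rw [tsum_congr this, tsum_mul_right, Fin.prod_univ_succ]

theorem geom_aux (q : ℝ) (hq0 : 0 < q) (hq1 : q < 1) (A : ℕ) (hA : 0 < A) :
    Summable (fun x : ℕ => q ^ ((x + 1) * A)) ∧
      (∑' x : ℕ, q ^ ((x + 1) * A)) = q ^ A / (1 - q ^ A) := by
  have hlt : q ^ A < 1 := pow_lt_one₀ hq0.le hq1 hA.ne'
  have h0 : (0:ℝ) ≤ q ^ A := pow_nonneg hq0.le A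
  have hfun : ∀ x : ℕ, q ^ ((x + 1) * A) = q ^ A * (q ^ A) ^ x := by
    intro x
    rw [← pow_mul, ← pow_add]
    ring_nf
  constructor
  · exact ((summable_geometric_of_lt_one h0 hlt).mul_left (q ^ A)).congr
      fun x => (hfun x).symm
  · rw [tsum_congr hfun, tsum_mul_left, tsum_geometric_of_lt_one h0 hlt,
      div_eq_mul_inv]

/-- Partial-sum map sending difference vectors to strictly decreasing positive vectors. -/
def Mfun (n : ℕ) (d : Fin n → ℕ) : Fin n → ℕ :=
  fun j => ∑ i ∈ Finset.univ.filter (fun i => j ≤ i), (d i + 1)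

theorem filter_le_eq_insert {n : ℕ} (j : Fin n) :
    Finset.univ.filter (fun i => j ≤ i) = insert j (Finset.univ.filter (fun i => j < i)) := by
  ext i
  simp only [mem_filter, mem_univ, true_and, mem_insert]
  rw [le_iff_lt_or_eq, or_comm, eq_comm]

theorem Mfun_eq_succ (n : ℕ) (d : Fin n → ℕ) (j : Fin n) :
    Mfun n d j = (d j + 1) + ∑ i ∈ Finset.univ.filter (fun i => j < i), (d i + 1) := by
  rw [Mfun, filter_le_eq_insert, Finset.sum_insert (by simp)]

theorem Mfun_strictAnti (n : ℕ) (d : Fin n → ℕ) (i j : Fin n) (hij : i < j) :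
    Mfun n d j < Mfun n d i := by
  apply Finset.sum_lt_sum_of_subset (i := i)
  · intro x hx
    simp only [mem_filter, mem_univ, true_and] at *
    exact le_trans hij.le hx
  · simp
  · simp [not_le.mpr hij]
  · omega
  · intro x _ _; omega

theorem Mfun_pos (n : ℕ) (d : Fin n → ℕ) (j : Fin n) : 0 < Mfun n d j := by
  rw [Mfun_eq_succ]; omega

theorem Mfun_inj (n : ℕ) : Function.Injective (Mfun n) := by
  intro d d' h
  by_contra hne
  have hs : (Finset.univ.filter (fun i => d i ≠ d' i)).Nonempty := by
    obtain ⟨i, hi⟩ := Function.ne_iff.mp hne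
    exact ⟨i, by simpa using hi⟩
  set j := (Finset.univ.filter (fun i => d i ≠ d' i)).max' hs with hj
  have hmem : d j ≠ d' j := by
    have := Finset.max'_mem _ hs
    rw [← hj] at this
    simpa using this
  have hagree : ∀ i, j < i → d i = d' i := by
    intro i hi
    by_contra hne'
    exact absurd (Finset.le_max' _ i (by simpa using hne')) (not_le.mpr hi)
  have h1 := congrFun h j
  rw [Mfun_eq_succ, Mfun_eq_succ] at h1
  have h2 : ∑ i ∈ Finset.univ.filter (fun i => j < i), (d i + 1)
      = ∑ i ∈ Finset.univ.filter (fun i => j < i), (d' i + 1) := by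
    apply Finset.sum_congr rfl
    intro i hi
    simp only [mem_filter, mem_univ, true_and] at hi
    rw [hagree i hi]
  omega

/-- telescoping for ℕ-subtraction -/
theorem tele (f : ℕ → ℕ) (hf : ∀ i, f (i + 1) ≤ f i) (a b : ℕ) (hab : a ≤ b) :
    ∑ i ∈ Finset.Ico a b, (f i - f (i + 1)) = f a - f b := by
  have mono : ∀ x y, x ≤ y → f y ≤ f x := fun x y hxy => by
    induction hxy with
    | refl => exact le_refl _
    | step h ih => exact le_trans (hf _) ih
  induction b, hab using Nat.le_induction with
  | base => simp
  | succ b hab ih =>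
      rw [Finset.sum_Ico_succ_top hab, ih]
      have := mono a b hab
      have := hf b
      omega

theorem Mfun_eq_Ico (n : ℕ) (d : Fin n → ℕ) (j : Fin n) :
    Mfun n d j = ∑ i ∈ Finset.Ico j.1 n,
      ((if h : i < n then d ⟨i, h⟩ else 0) + 1) := by
  rw [Mfun, Finset.sum_filter]
  have h1 : ∀ i : Fin n, (if j ≤ i then d i + 1 else 0)
      = (fun x : ℕ => if j.1 ≤ x then (if h : x < n then d ⟨x, h⟩ else 0) + 1 else 0) i.1 := by
    intro i
    by_cases h : (j : ℕ) ≤ (i : ℕ)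
    · simp only [if_pos (Fin.le_def.mpr h), if_pos h, dif_pos i.2, Fin.eta]
    · simp only [if_neg (fun hc => h (Fin.le_def.mp hc)), if_neg h]
  rw [Finset.sum_congr rfl (fun i _ => h1 i),
    Fin.sum_univ_eq_sum_range (fun x : ℕ => if j.1 ≤ x then (if h : x < n then d ⟨x, h⟩ else 0) + 1 else 0) n]
  rw [← Finset.sum_filter]
  congr 1
  ext x
  simp only [Finset.mem_filter, Finset.mem_range, Finset.mem_Ico]
  omega

theorem Mfun_surj (n : ℕ) (m : Fin n → ℕ)
    (hdec : ∀ i j : Fin n, i < j → m j < m i) (hpos : ∀ i, 0 < m i) :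
    ∃ d, Mfun n d = m := by
  classical
  set mm : ℕ → ℕ := fun i => if h : i < n then m ⟨i, h⟩ else 0 with hmm
  have hmm_anti : ∀ i, mm (i + 1) ≤ mm i := by
    intro i
    by_cases h1 : i + 1 < n
    · have h0 : i < n := by omega
      simp only [hmm, dif_pos h1, dif_pos h0]
      exact (hdec ⟨i, h0⟩ ⟨i + 1, h1⟩ (by simp [Fin.lt_def])).le
    · simp only [hmm, dif_neg h1]; omega
  have hmm_strict : ∀ i, i < n → mm (i + 1) < mm i := by
    intro i h0
    by_cases h1 : i + 1 < n
    · simp only [hmm, dif_pos h1, dif_pos h0]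
      exact hdec ⟨i, h0⟩ ⟨i + 1, h1⟩ (by simp [Fin.lt_def])
    · simp only [hmm, dif_neg h1, dif_pos h0]
      exact hpos _
  refine ⟨fun j => m j - mm (j.1 + 1) - 1, ?_⟩
  funext j
  rw [Mfun_eq_Ico]
  have hterm : ∀ i ∈ Finset.Ico j.1 n,
      ((if h : i < n then (m ⟨i, h⟩ - mm (i + 1) - 1) else 0) + 1) = mm i - mm (i + 1) := by
    intro i hi
    simp only [Finset.mem_Ico] at hi
    have h0 : i < n := hi.2
    have := hmm_strict i h0
    simp only [dif_pos h0]
    simp only [hmm, dif_pos h0] at this ⊢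
    omega
  rw [Finset.sum_congr rfl hterm, tele mm hmm_anti j.1 n j.2.le]
  have : mm n = 0 := by simp [hmm]
  have hj : mm j.1 = m j := by simp [hmm, j.2]
  omega

theorem expand_one (q : ℝ) (K t m : ℕ) :
    q ^ (K * m * t) * (1 - q ^ m) ^ K
      = ∑ l ∈ Finset.range (K + 1), (K.choose l : ℝ) * (-1) ^ l * q ^ (m * (l + K * t)) := by
  have h : (1 : ℝ) - q ^ m = -(q ^ m) + 1 := by ring
  rw [h, add_pow, Finset.mul_sum]
  apply Finset.sum_congr rfl
  intro l hl
  have e1 : m * (l + K * t) = m * l + K * m * t := by ring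
  rw [e1, pow_add, neg_pow, one_pow, ← pow_mul, mul_comm m l]
  ring

theorem swap_sum (n : ℕ) (d a : Fin n → ℕ) :
    ∑ j, Mfun n d j * a j
      = ∑ i, (d i + 1) * ∑ j ∈ Finset.univ.filter (fun j => j ≤ i), a j := by
  simp only [Mfun, Finset.sum_mul, Finset.mul_sum]
  exact Finset.sum_comm' (by intro x y; simp)

theorem expand_prod (q : ℝ) (n : ℕ) (k : Fin n → ℕ) (t : ℕ) (d : Fin n → ℕ) :
    (∏ j, q ^ (k j * Mfun n d j * t) * (1 - q ^ (Mfun n d j)) ^ (k j))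
      = ∑ l ∈ Fintype.piFinset (fun j : Fin n => Finset.range (k j + 1)),
          (∏ j, ((k j).choose (l j) : ℝ) * (-1) ^ (l j)) *
            ∏ i, q ^ ((d i + 1) * ∑ jj ∈ Finset.univ.filter (fun jj => jj ≤ i), (l jj + k jj * t)) := by
  rw [Finset.prod_congr rfl (fun j _ => expand_one q (k j) t (Mfun n d j)),
    Finset.prod_univ_sum]
  apply Finset.sum_congr rfl
  intro l hl
  rw [Finset.prod_mul_distrib]
  congr 1
  rw [Finset.prod_pow_eq_pow_sum, Finset.prod_pow_eq_pow_sum, swap_sum]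


/-- Binomial expansion of the modified `q`-MZV series into geometric-type series:
`∑_{m₁>⋯>mₙ>0} ∏ⱼ q^{kⱼmⱼt}(1-q^{mⱼ})^{kⱼ}
  = ∑_{l₁=0}^{k₁}⋯∑_{lₙ=0}^{kₙ} ∏ⱼ C(kⱼ,lⱼ)(-1)^{lⱼ+1} q^{Lⱼ}/(q^{Lⱼ}-1)`,
with `Lⱼ = (l₁+k₁t)+⋯+(lⱼ+kⱼt)`, for a positive integer `t`. -/
theorem qMZV_binomial_expansion (q : ℝ) (hq0 : 0 < q) (hq1 : q < 1)
    (n : ℕ) (k : Fin n → ℕ) (hk : ∀ j, 0 < k j) (t : ℕ) (ht : 0 < t) :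
    ∑' m : {m : Fin n → ℕ // (∀ i j : Fin n, i < j → m j < m i) ∧ ∀ i, 0 < m i},
        ∏ j, q ^ (k j * m.1 j * t) * (1 - q ^ (m.1 j)) ^ (k j) =
    ∑ l ∈ Fintype.piFinset (fun j : Fin n => Finset.range (k j + 1)),
      ∏ j, ((k j).choose (l j) : ℝ) * (-1) ^ (l j + 1) *
        (q ^ (∑ i ∈ Finset.univ.filter (· ≤ j), (l i + k i * t)) /
          (q ^ (∑ i ∈ Finset.univ.filter (· ≤ j), (l i + k i * t)) - 1)) := by
  classical
  set A : (Fin n → ℕ) → Fin n → ℕ :=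
    fun l i => ∑ jj ∈ Finset.univ.filter (fun jj => jj ≤ i), (l jj + k jj * t) with hA
  have hApos : ∀ l i, 0 < A l i := by
    intro l i
    have h1 : 0 < l i + k i * t := by
      have := Nat.mul_pos (hk i) ht; omega
    refine lt_of_lt_of_le h1 ?_
    exact Finset.single_le_sum (f := fun jj => l jj + k jj * t)
      (fun x _ => Nat.zero_le _) (by simp)
  set F : (Fin n → ℕ) → {m : Fin n → ℕ // (∀ i j : Fin n, i < j → m j < m i) ∧ ∀ i, 0 < m i} :=
    fun d => ⟨Mfun n d, ⟨fun i j h => Mfun_strictAnti n d i j h, fun i => Mfun_pos n d i⟩⟩ with hF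
  have hbij : Function.Bijective F := by
    constructor
    · intro d d' h
      exact Mfun_inj n (congrArg Subtype.val h)
    · rintro ⟨m, hdec, hpos⟩
      obtain ⟨d, hd⟩ := Mfun_surj n m hdec hpos
      exact ⟨d, Subtype.ext hd⟩
  rw [← Equiv.tsum_eq (Equiv.ofBijective F hbij)]
  have hstep1 : ∀ d : Fin n → ℕ,
      (∏ j, q ^ (k j * ((Equiv.ofBijective F hbij) d).1 j * t) *
        (1 - q ^ (((Equiv.ofBijective F hbij) d).1 j)) ^ (k j))
      = ∑ l ∈ Fintype.piFinset (fun j : Fin n => Finset.range (k j + 1)),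
          (∏ j, ((k j).choose (l j) : ℝ) * (-1) ^ (l j)) *
            ∏ i, q ^ ((d i + 1) * A l i) := by
    intro d
    have : ((Equiv.ofBijective F hbij) d).1 = Mfun n d := rfl
    rw [this]
    exact expand_prod q n k t d
  rw [tsum_congr hstep1]
  have hsummable : ∀ l ∈ Fintype.piFinset (fun j : Fin n => Finset.range (k j + 1)),
      Summable (fun d : Fin n → ℕ =>
        (∏ j, ((k j).choose (l j) : ℝ) * (-1) ^ (l j)) * ∏ i, q ^ ((d i + 1) * A l i)) := by
    intro l _
    exact ((pi_tsum n (fun i x => q ^ ((x + 1) * A l i))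
      (fun j x => pow_nonneg hq0.le _)
      (fun j => (geom_aux q hq0 hq1 (A l j) (hApos l j)).1)).1).mul_left _
  rw [Summable.tsum_finsetSum hsummable]
  apply Finset.sum_congr rfl
  intro l _
  rw [tsum_mul_left,
    (pi_tsum n (fun i x => q ^ ((x + 1) * A l i)) (fun j x => pow_nonneg hq0.le _)
      (fun j => (geom_aux q hq0 hq1 (A l j) (hApos l j)).1)).2]
  have hgeom : ∀ j : Fin n, (∑' x : ℕ, q ^ ((x + 1) * A l j)) = q ^ (A l j) / (1 - q ^ (A l j)) :=
    fun j => (geom_aux q hq0 hq1 (A l j) (hApos l j)).2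
  rw [Finset.prod_congr rfl (fun j _ => hgeom j)]
  rw [Finset.prod_congr rfl (fun (j : Fin n) _ => show
      ((k j).choose (l j) : ℝ) * (-1) ^ (l j + 1) * (q ^ (A l j) / (q ^ (A l j) - 1))
        = ((k j).choose (l j) : ℝ) * (-1) ^ (l j) * (q ^ (A l j) / (1 - q ^ (A l j))) by
    rw [pow_succ, show (1:ℝ) - q ^ (A l j) = -(q ^ (A l j) - 1) by ring, div_neg]
    ring)]
  rw [Finset.prod_mul_distrib]
  rw [← Finset.prod_mul_distrib, ← Finset.prod_mul_distrib]
end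

section
/- The quasi-shuffle algebra (ℚ⟨Y⟩, m_*) together with the deconcatenation coproduct Δ(w) = Σ_{uv = w} u ⊗ v is a bialgebra; i.e., Δ is an algebra homomorphism with respect to the quasi-shuffle product. -/
/-! Both sides obey the recursion of the quasi-shuffle product. On the left this follows from
`Δ(y_n w) = 1 ⊗ y_n w + (y_n ⊗ id) Δ(w)`. On the right, in `Δ(y_n u) · Δ(y_m v)` the pair of empty
prefixes gives `1 ⊗ (y_n u * y_m v)`; in every other term the defining recursion, applied to the
prefixes, regroups the sum into
`(y_n ⊗ id)(Δu · Δ(y_m v)) + (y_m ⊗ id)(Δ(y_n u) · Δv) + (y_{n+m} ⊗ id)(Δu · Δv)`.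
Induction on the total length concludes. -/

open TensorProduct

/-- The quasi-shuffle product of two words in `ℚ⟨Y⟩`, `Y = {yₙ : n ∈ ℤ}`. -/
noncomputable def qsh : List ℤ → List ℤ → (List ℤ →₀ ℚ)
  | [], u => Finsupp.single u 1
  | u, [] => Finsupp.single u 1
  | n :: u, m :: v =>
      Finsupp.mapDomain (List.cons n) (qsh u (m :: v)) +
      Finsupp.mapDomain (List.cons m) (qsh (n :: u) v) +
      Finsupp.mapDomain (List.cons (n + m)) (qsh u v)
termination_by a b => a.length + b.length

/-- Deconcatenation coproduct of a word: `Δ(w) = ∑_{uv=w} u ⊗ v`. -/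
noncomputable def deltaWord (w : List ℤ) :
    (List ℤ →₀ ℚ) ⊗[ℚ] (List ℤ →₀ ℚ) :=
  ∑ i ∈ Finset.range (w.length + 1),
    Finsupp.single (w.take i) (1 : ℚ) ⊗ₜ[ℚ] Finsupp.single (w.drop i) (1 : ℚ)

/-- Linear extension of the deconcatenation coproduct to `ℚ⟨Y⟩`. -/
noncomputable def deltaLin :
    (List ℤ →₀ ℚ) →ₗ[ℚ] (List ℤ →₀ ℚ) ⊗[ℚ] (List ℤ →₀ ℚ) :=
  Finsupp.lift _ ℚ (List ℤ) deltaWord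

lemma qsh_nil_left (w : List ℤ) : qsh [] w = Finsupp.single w 1 := by
  cases w <;> rw [qsh]

lemma qsh_nil_right (w : List ℤ) : qsh w [] = Finsupp.single w 1 := by
  cases w <;> simp [qsh]

lemma qsh_cons_cons (n m : ℤ) (u v : List ℤ) :
    qsh (n :: u) (m :: v) =
      Finsupp.mapDomain (List.cons n) (qsh u (m :: v)) +
      Finsupp.mapDomain (List.cons m) (qsh (n :: u) v) +
      Finsupp.mapDomain (List.cons (n + m)) (qsh u v) := by
  rw [qsh]

noncomputable def consLeft (n : ℤ) :
    (List ℤ →₀ ℚ) ⊗[ℚ] (List ℤ →₀ ℚ) →ₗ[ℚ] (List ℤ →₀ ℚ) ⊗[ℚ] (List ℤ →₀ ℚ) :=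
  TensorProduct.map (Finsupp.lmapDomain ℚ ℚ (List.cons n)) LinearMap.id

@[simp]
lemma consLeft_tmul (n : ℤ) (f g : List ℤ →₀ ℚ) :
    consLeft n (f ⊗ₜ g) = Finsupp.mapDomain (List.cons n) f ⊗ₜ g :=
  rfl

lemma deltaLin_single (w : List ℤ) (a : ℚ) :
    deltaLin (Finsupp.single w a) = a • deltaWord w := by
  simp [deltaLin]

lemma deltaWord_cons (n : ℤ) (w : List ℤ) :
    deltaWord (n :: w) =
      Finsupp.single [] 1 ⊗ₜ Finsupp.single (n :: w) 1 + consLeft n (deltaWord w) := by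
  rw [deltaWord, deltaWord, List.length_cons, Finset.sum_range_succ', add_comm, map_sum]
  simp [Finsupp.mapDomain_single]

lemma deltaLin_mapDomain_cons (n : ℤ) (f : List ℤ →₀ ℚ) :
    deltaLin (Finsupp.mapDomain (List.cons n) f) =
      Finsupp.single [] 1 ⊗ₜ Finsupp.mapDomain (List.cons n) f + consLeft n (deltaLin f) := by
  induction f using Finsupp.induction_linear with
  | zero => simp
  | add f g hf hg =>
    rw [Finsupp.mapDomain_add, map_add, hf, hg, map_add, map_add, tmul_add]
    abel
  | single w a =>
    rw [Finsupp.mapDomain_single, deltaLin_single, deltaLin_single, deltaWord_cons, smul_add,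
      map_smul, ← Finsupp.smul_single_one (n :: w) a, tmul_smul]

lemma deltaLin_qsh_cons_cons (n m : ℤ) (u v : List ℤ) :
    deltaLin (qsh (n :: u) (m :: v)) =
      Finsupp.single [] 1 ⊗ₜ qsh (n :: u) (m :: v) + consLeft n (deltaLin (qsh u (m :: v))) +
        consLeft m (deltaLin (qsh (n :: u) v)) + consLeft (n + m) (deltaLin (qsh u v)) := by
  rw [qsh_cons_cons, map_add, map_add, deltaLin_mapDomain_cons, deltaLin_mapDomain_cons,
    deltaLin_mapDomain_cons, tmul_add, tmul_add]
  abel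

/-- `Δ w₁ * Δ w₂`, computed with the componentwise quasi-shuffle product on the tensor square. -/
noncomputable def deltaQshDelta (w₁ w₂ : List ℤ) : (List ℤ →₀ ℚ) ⊗[ℚ] (List ℤ →₀ ℚ) :=
  ∑ i ∈ Finset.range (w₁.length + 1), ∑ j ∈ Finset.range (w₂.length + 1),
    qsh (w₁.take i) (w₂.take j) ⊗ₜ qsh (w₁.drop i) (w₂.drop j)

lemma deltaQshDelta_cons_cons (n m : ℤ) (u v : List ℤ) :
    deltaQshDelta (n :: u) (m :: v) =
      Finsupp.single [] 1 ⊗ₜ qsh (n :: u) (m :: v) + consLeft n (deltaQshDelta u (m :: v)) +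
        consLeft m (deltaQshDelta (n :: u) v) + consLeft (n + m) (deltaQshDelta u v) := by
  simp only [deltaQshDelta, List.length_cons, Finset.sum_range_succ', List.take_succ_cons,
    List.drop_succ_cons, List.take_zero, List.drop_zero, map_sum, map_add, consLeft_tmul,
    qsh_cons_cons n m, qsh_nil_left, qsh_nil_right, Finsupp.mapDomain_single, add_tmul,
    Finset.sum_add_distrib]
  abel

lemma deltaLin_qsh (w₁ w₂ : List ℤ) : deltaLin (qsh w₁ w₂) = deltaQshDelta w₁ w₂ :=
  match w₁, w₂ with
  | [], w => by simp [deltaQshDelta, qsh_nil_left, deltaLin_single, deltaWord]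
  | n :: u, [] => by simp [deltaQshDelta, qsh_nil_right, deltaLin_single, deltaWord]
  | n :: u, m :: v => by
    rw [deltaLin_qsh_cons_cons, deltaQshDelta_cons_cons, deltaLin_qsh u (m :: v),
      deltaLin_qsh (n :: u) v, deltaLin_qsh u v]
termination_by w₁.length + w₂.length

/-- The deconcatenation coproduct is an algebra homomorphism for the
quasi-shuffle product: on basis words,
`Δ(w₁ * w₂) = Δ(w₁) · Δ(w₂)`, the product on the right being the
componentwise quasi-shuffle product on the tensor square. -/
theorem delta_quasiShuffle_hom (w₁ w₂ : List ℤ) :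
    deltaLin (qsh w₁ w₂) =
      ∑ i ∈ Finset.range (w₁.length + 1), ∑ j ∈ Finset.range (w₂.length + 1),
        qsh (w₁.take i) (w₂.take j) ⊗ₜ[ℚ] qsh (w₁.drop i) (w₂.drop j) :=
  deltaLin_qsh w₁ w₂
end

section
/- Let 0 < q < 1 and a, b, c ∈ ℕ with a, b, c ≥ 1. Then the regularised Schlesinger–Zudilin q-zeta values at negative arguments satisfy ζ_q(-a,-b)·ζ_q(-c) = ζ_q(-c,-a,-b) + ζ_q(-a,-b,-c) + ζ_q(-a,-c,-b) + ζ_q(-a,-b-c) + ζ_q(-a-c,-b). -/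
/-!
Write `w(m) = q^m [m]_q = q^m (1 - q^m) / (1 - q)`. Then `ζ_q(-k₁,…,-kₙ)` is the nested sum
`∑_{m₁ > ⋯ > mₙ > 0} ∏ⱼ w(mⱼ)^{kⱼ}`, and `0 ≤ w(m) ≤ q^m / (1 - q)` makes every `w^k` with
`k ≥ 1` absolutely summable. The product of a depth-2 and a depth-1 nested sum is then an
absolutely convergent sum over `m₁ > m₂ > 0` and `m > 0`; splitting it according to where `m`
falls relative to `m₁ > m₂` (above, between, below, equal to `m₂`, equal to `m₁`) and reindexing
each region gives the five terms of the relation, the two diagonals because `w^b w^c = w^{b+c}`.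
-/

/-- Regularised Schlesinger–Zudilin `q`-zeta value at negative arguments
`ζ_q(-k₁,…,-kₙ) = ∑_{m₁>⋯>mₙ>0} ∏ⱼ q^{kⱼmⱼ}(1-q^{mⱼ})^{kⱼ}/(1-q)^{kⱼ}`. -/
noncomputable def Zq (q : ℝ) {n : ℕ} (k : Fin n → ℕ) : ℝ :=
  ∑' m : {m : Fin n → ℕ // (∀ i j : Fin n, i < j → m j < m i) ∧ ∀ i, 0 < m i},
    ∏ j, q ^ (k j * m.1 j) * (1 - q ^ (m.1 j)) ^ (k j) / (1 - q) ^ (k j)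

namespace QuasiShuffle

section Defs

variable {R : Type*} [NonUnitalNonAssocSemiring R] [TopologicalSpace R]

noncomputable def nestedSum1 (f : ℕ → R) : R :=
  ∑' m : ℕ, if 0 < m then f m else 0

noncomputable def nestedSum2 (f g : ℕ → R) : R :=
  ∑' n : ℕ × ℕ, if n.2 < n.1 ∧ 0 < n.2 then f n.1 * g n.2 else 0

noncomputable def nestedSum3 (f g h : ℕ → R) : R :=
  ∑' n : ℕ × ℕ × ℕ, if n.2.1 < n.1 ∧ n.2.2 < n.2.1 ∧ 0 < n.2.2 then
    f n.1 * g n.2.1 * h n.2.2 else 0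

end Defs

theorem ite_mul_ite_eq_sum_regions {R : Type*} [NonUnitalNonAssocSemiring R] (f g h : ℕ → R)
    (x : (ℕ × ℕ) × ℕ) :
    (if x.1.2 < x.1.1 ∧ 0 < x.1.2 then f x.1.1 * g x.1.2 else 0) *
        (if 0 < x.2 then h x.2 else 0) =
      (if x.1.2 < x.1.1 ∧ 0 < x.1.2 ∧ x.1.1 < x.2 then f x.1.1 * g x.1.2 * h x.2 else 0) +
      (if x.1.2 < x.1.1 ∧ 0 < x.2 ∧ x.2 < x.1.2 then f x.1.1 * g x.1.2 * h x.2 else 0) +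
      (if x.1.2 < x.1.1 ∧ 0 < x.1.2 ∧ x.1.2 < x.2 ∧ x.2 < x.1.1 then
        f x.1.1 * g x.1.2 * h x.2 else 0) +
      (if x.1.2 < x.1.1 ∧ 0 < x.1.2 ∧ x.2 = x.1.2 then f x.1.1 * g x.1.2 * h x.2 else 0) +
      (if x.1.2 < x.1.1 ∧ 0 < x.1.2 ∧ x.2 = x.1.1 then f x.1.1 * g x.1.2 * h x.2 else 0) := by
  split_ifs <;> first | omega | simp

section Reindex

variable {R : Type*} [CommSemiring R] [TopologicalSpace R] (f g h : ℕ → R)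

theorem tsum_region_above :
    (∑' x : (ℕ × ℕ) × ℕ, if x.1.2 < x.1.1 ∧ 0 < x.1.2 ∧ x.1.1 < x.2 then
      f x.1.1 * g x.1.2 * h x.2 else 0) = nestedSum3 h f g := by
  rw [nestedSum3, ← (Equiv.prodComm (ℕ × ℕ) ℕ).tsum_eq]
  refine tsum_congr fun ⟨⟨n₁, n₂⟩, m⟩ => ?_
  simp only [Equiv.prodComm_apply, Prod.swap_prod_mk]
  exact if_congr (by omega) (by ring) rfl

theorem tsum_region_below :
    (∑' x : (ℕ × ℕ) × ℕ, if x.1.2 < x.1.1 ∧ 0 < x.2 ∧ x.2 < x.1.2 then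
      f x.1.1 * g x.1.2 * h x.2 else 0) = nestedSum3 f g h := by
  rw [nestedSum3, ← (Equiv.prodAssoc ℕ ℕ ℕ).tsum_eq]
  refine tsum_congr fun ⟨⟨n₁, n₂⟩, m⟩ => ?_
  simp only [Equiv.prodAssoc_apply]
  exact if_congr (by omega) rfl rfl

theorem tsum_region_between :
    (∑' x : (ℕ × ℕ) × ℕ, if x.1.2 < x.1.1 ∧ 0 < x.1.2 ∧ x.1.2 < x.2 ∧ x.2 < x.1.1 then
      f x.1.1 * g x.1.2 * h x.2 else 0) = nestedSum3 f h g := by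
  rw [nestedSum3, ← ((Equiv.prodAssoc ℕ ℕ ℕ).trans
    ((Equiv.refl ℕ).prodCongr (Equiv.prodComm ℕ ℕ))).tsum_eq]
  refine tsum_congr fun ⟨⟨n₁, n₂⟩, m⟩ => ?_
  simp only [Equiv.trans_apply, Equiv.prodAssoc_apply, Equiv.prodCongr_apply, Equiv.coe_refl,
    Equiv.prodComm_apply, Prod.map_apply, id_eq, Prod.swap_prod_mk]
  exact if_congr (by omega) (by ring) rfl

theorem tsum_region_eq_lower :
    (∑' x : (ℕ × ℕ) × ℕ, if x.1.2 < x.1.1 ∧ 0 < x.1.2 ∧ x.2 = x.1.2 then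
      f x.1.1 * g x.1.2 * h x.2 else 0) = nestedSum2 f (g * h) := by
  have hinj : Function.Injective fun n : ℕ × ℕ => (n, n.2) := fun _ _ h => congrArg Prod.fst h
  rw [nestedSum2, ← hinj.tsum_eq]
  · refine tsum_congr fun n => ?_
    simp only [Pi.mul_apply, and_true, mul_assoc]
  · intro x hx
    obtain ⟨⟨-, -, hm⟩, -⟩ := ite_ne_right_iff.mp hx
    exact ⟨x.1, Prod.ext rfl hm.symm⟩

theorem tsum_region_eq_upper :
    (∑' x : (ℕ × ℕ) × ℕ, if x.1.2 < x.1.1 ∧ 0 < x.1.2 ∧ x.2 = x.1.1 then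
      f x.1.1 * g x.1.2 * h x.2 else 0) = nestedSum2 (f * h) g := by
  have hinj : Function.Injective fun n : ℕ × ℕ => (n, n.1) := fun _ _ h => congrArg Prod.fst h
  rw [nestedSum2, ← hinj.tsum_eq]
  · refine tsum_congr fun n => ?_
    simp only [Pi.mul_apply, and_true, mul_right_comm]
  · intro x hx
    obtain ⟨⟨-, -, hm⟩, -⟩ := ite_ne_right_iff.mp hx
    exact ⟨x.1, Prod.ext rfl hm.symm⟩

end Reindex

theorem summable_norm_ite {X E : Type*} [SeminormedAddCommGroup E] {u : X → E}
    (hu : Summable (‖u ·‖)) (p : X → Prop) [DecidablePred p] :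
    Summable fun x => ‖if p x then u x else 0‖ :=
  hu.of_nonneg_of_le (fun _ => norm_nonneg _) fun x => by split_ifs <;> simp

theorem nestedSum2_mul_nestedSum1 {R : Type*} [NormedCommRing R] [CompleteSpace R]
    {f g h : ℕ → R} (hf : Summable (‖f ·‖)) (hg : Summable (‖g ·‖)) (hh : Summable (‖h ·‖)) :
    nestedSum2 f g * nestedSum1 h = nestedSum3 h f g + nestedSum3 f g h + nestedSum3 f h g +
      nestedSum2 f (g * h) + nestedSum2 (f * h) g := by
  have hpiece (p : (ℕ × ℕ) × ℕ → Prop) [DecidablePred p] :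
      Summable fun x => if p x then f x.1.1 * g x.1.2 * h x.2 else 0 :=
    (summable_norm_ite ((hf.mul_norm hg).mul_norm hh) p).of_norm
  rw [nestedSum2, nestedSum1, tsum_mul_tsum_of_summable_norm
      (summable_norm_ite (hf.mul_norm hg) _) (summable_norm_ite hh _),
    tsum_congr (ite_mul_ite_eq_sum_regions f g h), Summable.tsum_add ?_ (hpiece _),
    Summable.tsum_add ?_ (hpiece _), Summable.tsum_add ?_ (hpiece _),
    Summable.tsum_add (hpiece _) (hpiece _), tsum_region_above, tsum_region_below,
    tsum_region_between, tsum_region_eq_lower, tsum_region_eq_upper]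
  · exact (hpiece _).add (hpiece _)
  · exact ((hpiece _).add (hpiece _)).add (hpiece _)
  · exact (((hpiece _).add (hpiece _)).add (hpiece _)).add (hpiece _)

end QuasiShuffle

open QuasiShuffle

def finThreeArrowEquiv (α : Type*) : (Fin 3 → α) ≃ α × α × α where
  toFun v := (v 0, v 1, v 2)
  invFun t := ![t.1, t.2.1, t.2.2]
  left_inv v := by ext i; fin_cases i <;> rfl
  right_inv _ := rfl

@[simp]
theorem finThreeArrowEquiv_symm_apply {α : Type*} (t : α × α × α) :
    (finThreeArrowEquiv α).symm t = ![t.1, t.2.1, t.2.2] :=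
  rfl

noncomputable def qWeight (q : ℝ) (m : ℕ) : ℝ := q ^ m * (1 - q ^ m) / (1 - q)

section qWeight

variable {q : ℝ}

theorem qWeight_pow (q : ℝ) (m k : ℕ) :
    qWeight q m ^ k = q ^ (k * m) * (1 - q ^ m) ^ k / (1 - q) ^ k := by
  rw [qWeight, div_pow, mul_pow, pow_mul, pow_right_comm]

theorem qWeight_nonneg (hq0 : 0 ≤ q) (hq1 : q ≤ 1) (m : ℕ) : 0 ≤ qWeight q m :=
  div_nonneg (mul_nonneg (pow_nonneg hq0 m) (sub_nonneg.mpr (pow_le_one₀ hq0 hq1)))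
    (sub_nonneg.mpr hq1)

theorem qWeight_le (hq0 : 0 ≤ q) (hq1 : q ≤ 1) (m : ℕ) : qWeight q m ≤ q ^ m / (1 - q) :=
  div_le_div_of_nonneg_right
    (mul_le_of_le_one_right (pow_nonneg hq0 m) (sub_le_self _ (pow_nonneg hq0 m)))
    (sub_nonneg.mpr hq1)

theorem summable_norm_qWeight_pow (hq0 : 0 ≤ q) (hq1 : q < 1) {k : ℕ} (hk : 0 < k) :
    Summable fun m => ‖qWeight q m ^ k‖ := by
  have hgeom : Summable fun m : ℕ => (q ^ k) ^ m / (1 - q) ^ k :=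
    (summable_geometric_of_lt_one (pow_nonneg hq0 k) (pow_lt_one₀ hq0 hq1 hk.ne')).div_const _
  refine hgeom.of_nonneg_of_le (fun _ => norm_nonneg _) fun m => ?_
  have hw := qWeight_nonneg hq0 hq1.le m
  calc ‖qWeight q m ^ k‖ = qWeight q m ^ k := Real.norm_of_nonneg (pow_nonneg hw k)
    _ ≤ (q ^ m / (1 - q)) ^ k := pow_le_pow_left₀ hw (qWeight_le hq0 hq1.le m) k
    _ = (q ^ k) ^ m / (1 - q) ^ k := by rw [div_pow, ← pow_mul, ← pow_mul, mul_comm]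

end qWeight

theorem Zq_eq_tsum (q : ℝ) {n : ℕ} (k : Fin n → ℕ) :
    Zq q k = ∑' m : Fin n → ℕ,
      if StrictAnti m ∧ ∀ i, 0 < m i then ∏ j, qWeight q (m j) ^ k j else 0 := by
  simp only [Zq, ← qWeight_pow]
  exact (tsum_subtype {m | StrictAnti m ∧ ∀ i, 0 < m i} fun m => ∏ j, qWeight q (m j) ^ k j).trans
    (tsum_congr fun m => by rw [Set.indicator_apply]; congr 1)

theorem Zq_one (q : ℝ) (k : ℕ) : Zq q ![k] = nestedSum1 (qWeight q · ^ k) := by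
  rw [Zq_eq_tsum, nestedSum1, ← (Equiv.funUnique (Fin 1) ℕ).symm.tsum_eq]
  refine tsum_congr fun m => if_congr ?_ ?_ rfl
  · simp [Subsingleton.strictAnti]
  · simp

theorem Zq_two (q : ℝ) (k₁ k₂ : ℕ) :
    Zq q ![k₁, k₂] = nestedSum2 (qWeight q · ^ k₁) (qWeight q · ^ k₂) := by
  rw [Zq_eq_tsum, nestedSum2, ← (finTwoArrowEquiv ℕ).symm.tsum_eq]
  refine tsum_congr fun n => if_congr ?_ ?_ rfl
  · simp only [Nat.reduceAdd, finTwoArrowEquiv_symm_apply, strictAnti_vecCons,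
      strictAnti_vecEmpty, Fin.forall_fin_succ, Matrix.cons_val_zero, Matrix.cons_val_succ,
      Matrix.cons_val_fin_one, and_true, forall_const]
    omega
  · simp [Fin.prod_univ_succ]

theorem Zq_three (q : ℝ) (k₁ k₂ k₃ : ℕ) :
    Zq q ![k₁, k₂, k₃] =
      nestedSum3 (qWeight q · ^ k₁) (qWeight q · ^ k₂) (qWeight q · ^ k₃) := by
  rw [Zq_eq_tsum, nestedSum3, ← (finThreeArrowEquiv ℕ).symm.tsum_eq]
  refine tsum_congr fun n => if_congr ?_ ?_ rfl
  · simp only [Nat.reduceAdd, finThreeArrowEquiv_symm_apply, strictAnti_vecCons,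
      strictAnti_vecEmpty, Fin.forall_fin_succ, Matrix.cons_val_zero, Matrix.cons_val_succ,
      Matrix.cons_val_fin_one, and_true, forall_const]
    omega
  · simp [Fin.prod_univ_succ, mul_assoc]

/-- The depth `(2,1)` quasi-shuffle relation
`ζ_q(-a,-b)ζ_q(-c) = ζ_q(-c,-a,-b) + ζ_q(-a,-b,-c) + ζ_q(-a,-c,-b)
  + ζ_q(-a,-b-c) + ζ_q(-a-c,-b)`. -/
theorem SZ_quasiShuffle_21 (q : ℝ) (hq0 : 0 < q) (hq1 : q < 1)
    (a b c : ℕ) (ha : 1 ≤ a) (hb : 1 ≤ b) (hc : 1 ≤ c) :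
    Zq q ![a, b] * Zq q ![c] =
      Zq q ![c, a, b] + Zq q ![a, b, c] + Zq q ![a, c, b] +
      Zq q ![a, b + c] + Zq q ![a + c, b] := by
  have hsum {k : ℕ} (hk : 0 < k) := summable_norm_qWeight_pow hq0.le hq1 hk
  have hpow (i j : ℕ) : (qWeight q · ^ i) * (qWeight q · ^ j) = (qWeight q · ^ (i + j)) :=
    funext fun m => (pow_add (qWeight q m) i j).symm
  rw [Zq_two, Zq_one, nestedSum2_mul_nestedSum1 (hsum ha) (hsum hb) (hsum hc), hpow, hpow,
    Zq_three, Zq_three, Zq_three, Zq_two, Zq_two]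
end

section
/- Let k be a positive integer, t a positive real, and consider the Laurent expansion in z of ψ^{(t)}(y_{-k})(z) := (-z)^{-k}·Σ_{m>0} e^{zkm t}(1 - e^{zm})^{k}. Its coefficient of z^0 equals -B_{k+1}/(k+1), independently of t. -/
/-!
For `z = -w < 0` the geometric series in `m` sum to `(-1)^k Δ^k φ (kt)`, the `k`-th forward
difference with step `1` of `φ x = 1 / (e^{wx} - 1)`. For `0 < wx < 1/2` one has
`φ x = 1 / (wx) + ∑ₙ Bₙ₊₁ / (n+1)! (wx)^n` (Mathlib's `bernoulli`, with `B₁ = -1/2`; the series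
converges there because `|Bₙ / n!| ≤ 2^n`). The term `1 / (wx)` produces exactly the subtracted
principal part. Since `Δ^k xⁿ` vanishes for `n < k` and equals `k!` for `n = k`, what remains is a
power series in `w` with constant term `(-1)^k Bₖ₊₁ / (k+1) = -B'ₖ₊₁ / (k+1)`.
-/

open Filter Topology Finset Nat fwdDiff

theorem PowerSeries.tsum_coeff_mul_mul_pow {R : Type*} [NormedCommRing R] [CompleteSpace R]
    {f g : PowerSeries R} {x : R} (hf : Summable fun n ↦ ‖coeff n f * x ^ n‖)
    (hg : Summable fun n ↦ ‖coeff n g * x ^ n‖) :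
    ∑' n, coeff n (f * g) * x ^ n =
      (∑' n, coeff n f * x ^ n) * ∑' n, coeff n g * x ^ n := by
  rw [tsum_mul_tsum_eq_tsum_sum_antidiagonal_of_summable_norm hf hg]
  refine tsum_congr fun n ↦ ?_
  rw [coeff_mul, Finset.sum_mul]
  refine Finset.sum_congr rfl fun p hp ↦ ?_
  rw [← Finset.HasAntidiagonal.mem_antidiagonal.mp hp, pow_add]
  ring

theorem sum_range_bernoulli_div_factorial_div_factorial (n : ℕ) :
    ∑ i ∈ range (n + 2), (bernoulli i / i ! : ℝ) / (n + 2 - i)! = 0 := by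
  have h := congrArg (fun q : ℚ ↦ (q : ℝ) / (n + 2)!) (sum_bernoulli (n + 2))
  simp only [if_neg (by omega : n + 2 ≠ 1), Rat.cast_zero, zero_div, Rat.cast_sum, Rat.cast_mul,
    Rat.cast_natCast, Finset.sum_div] at h
  rw [← h]
  refine Finset.sum_congr rfl fun i hi ↦ ?_
  rw [Nat.cast_choose ℝ (mem_range.mp hi).le]
  field_simp

theorem abs_bernoulli_div_factorial_le_two_pow (n : ℕ) :
    |(bernoulli n / n ! : ℝ)| ≤ 2 ^ n := by
  induction n using Nat.strong_induction_on with
  | _ n ih =>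
  match n with
  | 0 => simp
  | n + 1 =>
    have hrec := sum_range_bernoulli_div_factorial_div_factorial n
    rw [sum_range_succ, show n + 2 - (n + 1) = 1 by omega, factorial_one, cast_one, div_one,
      add_eq_zero_iff_neg_eq] at hrec
    rw [← hrec, abs_neg]
    calc |∑ i ∈ range (n + 1), (bernoulli i / i ! : ℝ) / (n + 2 - i)!|
        ≤ ∑ i ∈ range (n + 1), (2 : ℝ) ^ i / 2 := by
          refine (abs_sum_le_sum_abs _ _).trans (sum_le_sum fun i hi ↦ ?_)
          have hi := mem_range.mp hi
          have h2 : (2 : ℝ) ≤ (n + 2 - i)! := by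
            exact_mod_cast (Nat.self_le_factorial 2).trans (Nat.factorial_le (by omega))
          rw [abs_div, abs_of_pos (by positivity : (0 : ℝ) < (n + 2 - i)!)]
          exact div_le_div₀ (by positivity) (ih i (by omega)) (by norm_num) h2
      _ ≤ 2 ^ (n + 1) := by
          rw [← sum_div, geom_sum_eq (by norm_num) (n + 1)]
          have : (0 : ℝ) ≤ 2 ^ (n + 1) := by positivity
          linarith

theorem summable_norm_bernoulli_div_factorial_mul_pow {x : ℝ} (hx : |x| < 1 / 2) :
    Summable fun n ↦ ‖(bernoulli n / n ! : ℝ) * x ^ n‖ := by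
  refine .of_nonneg_of_le (fun _ ↦ norm_nonneg _) (fun n ↦ ?_)
    (summable_geometric_of_lt_one (by positivity) (by linarith : 2 * |x| < 1))
  rw [Real.norm_eq_abs, abs_mul, abs_pow, mul_pow]
  exact mul_le_mul_of_nonneg_right (abs_bernoulli_div_factorial_le_two_pow n) (by positivity)

theorem hasSum_bernoulli_div_factorial_mul_pow {x : ℝ} (hx₀ : x ≠ 0) (hx : |x| < 1 / 2) :
    HasSum (fun n ↦ (bernoulli n / n ! : ℝ) * x ^ n) (x / (Real.exp x - 1)) := by
  set e : ℕ → ℝ := fun n ↦ x ^ n / (n ! : ℝ) - if n = 0 then 1 else 0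
  have hcoeffB (n : ℕ) : PowerSeries.coeff n (bernoulliPowerSeries ℝ) = bernoulli n / n ! := by
    simp [bernoulliPowerSeries]
  have hcoeffE (n : ℕ) : PowerSeries.coeff n (PowerSeries.exp ℝ - 1) * x ^ n = e n := by
    rcases n with _ | n <;> simp [e, PowerSeries.coeff_one, div_eq_inv_mul]
  have hE : HasSum e (Real.exp x - 1) := by
    rw [Real.exp_eq_exp_ℝ]
    exact (NormedSpace.expSeries_div_hasSum_exp x).sub (hasSum_ite_eq 0 1)
  have hEnorm : Summable fun n ↦ ‖e n‖ := by
    refine .of_nonneg_of_le (fun _ ↦ norm_nonneg _) (fun n ↦ (norm_sub_le _ _).trans ?_)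
      ((Real.summable_pow_div_factorial |x|).add (hasSum_ite_eq 0 (1 : ℝ)).summable)
    split_ifs <;> simp
  have hB := summable_norm_bernoulli_div_factorial_mul_pow hx
  have hprod := PowerSeries.tsum_coeff_mul_mul_pow (x := x) (f := bernoulliPowerSeries ℝ)
    (g := PowerSeries.exp ℝ - 1) (by simpa only [hcoeffB] using hB)
    (by simpa only [hcoeffE] using hEnorm)
  simp only [bernoulliPowerSeries_mul_exp_sub_one, PowerSeries.coeff_X, hcoeffB, hcoeffE,
    hE.tsum_eq, ite_mul, one_mul, zero_mul, tsum_ite_eq, pow_one] at hprod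
  have hexp : Real.exp x - 1 ≠ 0 := sub_ne_zero.mpr (Real.exp_eq_one_iff x |>.not.mpr hx₀)
  rw [eq_comm, ← eq_div_iff hexp] at hprod
  exact hprod ▸ hB.of_norm.hasSum

theorem hasSum_bernoulli_succ_div_factorial_mul_pow {x : ℝ} (hx₀ : x ≠ 0) (hx : |x| < 1 / 2) :
    HasSum (fun n ↦ (bernoulli (n + 1) / (n + 1)! : ℝ) * x ^ n)
      ((Real.exp x - 1)⁻¹ - x⁻¹) := by
  have h := (hasSum_nat_add_iff' 1).mpr (hasSum_bernoulli_div_factorial_mul_pow hx₀ hx)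
    |>.mul_left x⁻¹
  have hval :
      x⁻¹ * (x / (Real.exp x - 1) - ∑ i ∈ range 1, (bernoulli i / i ! : ℝ) * x ^ i) =
        (Real.exp x - 1)⁻¹ - x⁻¹ := by
    simp [mul_sub, div_eq_mul_inv, hx₀]
  rw [hval] at h
  refine h.congr_fun fun n ↦ ?_
  field_simp
  ring

theorem fwdDiff_iter_eq_sum_choose_mul_neg_one_pow {R : Type*} [CommRing R] (f : R → R)
    (k : ℕ) (c : R) :
    Δ_[1] ^[k] f c = ∑ l ∈ range (k + 1), (k.choose l : R) * (-1) ^ (l + k) * f (l + c) := by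
  rw [fwdDiff_iter_eq_sum_shift]
  refine sum_congr rfl fun l hl ↦ ?_
  obtain ⟨j, rfl⟩ := Nat.exists_eq_add_of_le (mem_range_succ_iff.mp hl)
  rw [zsmul_eq_mul, nsmul_one, add_comm c, Nat.add_sub_cancel_left]
  push_cast
  rw [← add_assoc, ← two_mul, pow_add, pow_mul]
  ring

theorem fwdDiff_iter_sub {M G : Type*} [AddCommMonoid M] [AddCommGroup G] (h : M) (f g : M → G)
    (k : ℕ) : Δ_[h] ^[k] (f - g) = Δ_[h] ^[k] f - Δ_[h] ^[k] g := by
  rw [eq_sub_iff_add_eq, ← fwdDiff_iter_add, sub_add_cancel]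

theorem hasSum_fwdDiff_iter {ι M G : Type*} [AddCommMonoid M] [AddCommGroup G]
    [TopologicalSpace G] [IsTopologicalAddGroup G] {f : ι → M → G} {g : M → G} {h y : M}
    {k : ℕ} (hf : ∀ l ≤ k, HasSum (fun i ↦ f i (y + l • h)) (g (y + l • h))) :
    HasSum (fun i ↦ Δ_[h] ^[k] (f i) y) (Δ_[h] ^[k] g y) := by
  simp only [fwdDiff_iter_eq_sum_shift]
  exact hasSum_sum fun l hl ↦ (hf l (mem_range_succ_iff.mp hl)).const_smul _

theorem fwdDiff_iter_exp_mul (a y : ℝ) (k : ℕ) :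
    Δ_[1] ^[k] (fun x ↦ Real.exp (a * x)) y = (Real.exp a - 1) ^ k * Real.exp (a * y) := by
  let e : AddChar ℝ ℝ :=
    { toFun x := Real.exp (a * x)
      map_zero_eq_one' := by simp
      map_add_eq_mul' x x' := by rw [mul_add, Real.exp_add] }
  simpa [e] using fwdDiff_addChar_eq e y 1 k

theorem abs_fwdDiff_iter_pow_le {c : ℝ} (hc : 0 ≤ c) (k n : ℕ) :
    |Δ_[1] ^[k] (fun x : ℝ ↦ x ^ n) c| ≤ 2 ^ k * (k + c) ^ n := by
  have h2 : (2 : ℝ) ^ k = ∑ l ∈ range (k + 1), (k.choose l : ℝ) := by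
    exact_mod_cast (Nat.sum_range_choose k).symm
  rw [fwdDiff_iter_eq_sum_choose_mul_neg_one_pow, h2, sum_mul]
  refine (abs_sum_le_sum_abs _ _).trans (sum_le_sum fun l hl ↦ ?_)
  have hl : (l : ℝ) ≤ k := by exact_mod_cast mem_range_succ_iff.mp hl
  rw [abs_mul, abs_mul, abs_pow, abs_neg, abs_one, one_pow, mul_one, Nat.abs_cast, abs_pow,
    abs_of_nonneg (by positivity)]
  gcongr

theorem hasSum_exp_nat_succ_mul {a : ℝ} (ha : a < 0) :
    HasSum (fun m : ℕ ↦ Real.exp ((m + 1) * a)) (Real.exp (-a) - 1)⁻¹ := by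
  have hexp : Real.exp a < 1 := Real.exp_lt_one_iff.mpr ha
  have h := (hasSum_geometric_of_lt_one (Real.exp_pos a).le hexp).mul_left (Real.exp a)
  have hterm (m : ℕ) : Real.exp a * Real.exp a ^ m = Real.exp ((m + 1) * a) := by
    rw [← Real.exp_nat_mul, ← Real.exp_add]
    ring_nf
  have hsum : Real.exp a * (1 - Real.exp a)⁻¹ = (Real.exp (-a) - 1)⁻¹ := by
    rw [Real.exp_neg]
    field_simp
  simpa only [hterm, hsum] using h

theorem tsum_pnat_exp_mul_mul_one_sub_exp_pow {z c : ℝ} (hz : z < 0) (hc : 0 < c) (k : ℕ) :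
    ∑' m : ℕ+, Real.exp (z * m * c) * (1 - Real.exp (z * m)) ^ k =
      (-1) ^ k * Δ_[1] ^[k] (fun x ↦ (Real.exp (-z * x) - 1)⁻¹) c := by
  have hgeom : HasSum (fun m : ℕ ↦ Δ_[1] ^[k] (fun x ↦ Real.exp (z * (m + 1) * x)) c)
      (Δ_[1] ^[k] (fun x ↦ (Real.exp (-z * x) - 1)⁻¹) c) := by
    refine hasSum_fwdDiff_iter fun l _ ↦ ?_
    have hx : 0 < c + l • (1 : ℝ) := by positivity
    simpa only [neg_mul, mul_comm z, mul_assoc] using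
      hasSum_exp_nat_succ_mul (mul_neg_of_pos_of_neg hx hz)
  rw [tsum_pnat_eq_tsum_succ
      (f := fun m : ℕ ↦ Real.exp (z * m * c) * (1 - Real.exp (z * m)) ^ k),
    ← (hgeom.mul_left ((-1) ^ k)).tsum_eq]
  refine tsum_congr fun m ↦ ?_
  rw [fwdDiff_iter_exp_mul, ← mul_assoc, ← mul_pow, neg_one_mul, neg_sub]
  push_cast
  ring_nf

theorem hasSum_fwdDiff_iter_inv_exp_sub_one_sub_inv {w c : ℝ} {k : ℕ} (hw : 0 < w)
    (hc : 0 < c) (hwc : w * (k + c) < 1 / 2) :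
    HasSum
      (fun n ↦ (bernoulli (n + 1) / (n + 1)! : ℝ) * w ^ n * Δ_[1] ^[k] (fun x ↦ x ^ n) c)
      (Δ_[1] ^[k] (fun x ↦ (Real.exp (w * x) - 1)⁻¹ - (w * x)⁻¹) c) := by
  have hterm (n : ℕ) :
      (bernoulli (n + 1) / (n + 1)! : ℝ) * w ^ n * Δ_[1] ^[k] (fun x ↦ x ^ n) c =
        Δ_[1] ^[k] (fun x ↦ (bernoulli (n + 1) / (n + 1)! : ℝ) * (w * x) ^ n) c := by
    have : (fun x ↦ (bernoulli (n + 1) / (n + 1)! : ℝ) * (w * x) ^ n) =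
        ((bernoulli (n + 1) / (n + 1)! : ℝ) * w ^ n) • fun x ↦ x ^ n := by
      ext x
      simp [mul_pow, mul_assoc]
    rw [this, fwdDiff_iter_const_smul]
    rfl
  simp only [hterm]
  refine hasSum_fwdDiff_iter fun l hl ↦ ?_
  have hx : 0 < w * (c + l • (1 : ℝ)) := by positivity
  have hl : (l : ℝ) ≤ k := by exact_mod_cast hl
  refine hasSum_bernoulli_succ_div_factorial_mul_pow hx.ne' ?_
  rw [abs_of_pos hx, nsmul_one]
  calc w * (c + l) ≤ w * (k + c) := mul_le_mul_of_nonneg_left (by linarith) hw.le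
    _ < 1 / 2 := hwc

theorem hasSum_fwdDiff_iter_inv_exp_sub_one_sub_inv_div_pow {w c : ℝ} {k : ℕ} (hw : 0 < w)
    (hc : 0 < c) (hwc : w * (k + c) < 1 / 2) :
    HasSum (fun n ↦ (bernoulli (n + k + 1) / (n + k + 1)! : ℝ) *
        Δ_[1] ^[k] (fun x ↦ x ^ (n + k)) c * w ^ n)
      (Δ_[1] ^[k] (fun x ↦ (Real.exp (w * x) - 1)⁻¹ - (w * x)⁻¹) c / w ^ k) := by
  have h := (hasSum_nat_add_iff' k).mpr (hasSum_fwdDiff_iter_inv_exp_sub_one_sub_inv hw hc hwc)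
  have hhead : ∑ i ∈ range k,
      (bernoulli (i + 1) / (i + 1)! : ℝ) * w ^ i * Δ_[1] ^[k] (fun x ↦ x ^ i) c = 0 :=
    sum_eq_zero fun i hi ↦ by simp [fwdDiff_iter_pow_eq_zero_of_lt (mem_range.mp hi)]
  rw [hhead, sub_zero] at h
  refine (h.div_const (w ^ k)).congr_fun fun n ↦ ?_
  field_simp
  ring

theorem abs_bernoulli_mul_fwdDiff_iter_pow_le {c : ℝ} (hc : 0 ≤ c) (k n : ℕ) :
    |(bernoulli (n + k + 1) / (n + k + 1)! : ℝ) * Δ_[1] ^[k] (fun x ↦ x ^ (n + k)) c| ≤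
      2 ^ (2 * k + 1) * (k + c) ^ k * (2 * (k + c)) ^ n := by
  rw [abs_mul]
  calc _ ≤ 2 ^ (n + k + 1) * (2 ^ k * (k + c) ^ (n + k)) :=
        mul_le_mul (abs_bernoulli_div_factorial_le_two_pow _) (abs_fwdDiff_iter_pow_le hc k _)
          (abs_nonneg _) (by positivity)
    _ = _ := by rw [mul_pow, pow_add, pow_add]; ring

theorem tendsto_tsum_mul_pow_nhds_zero {a : ℕ → ℝ} {C R : ℝ} (hR : 0 < R)
    (ha : ∀ n, |a n| ≤ C * R ^ n) :
    Tendsto (fun w ↦ ∑' n, a n * w ^ n) (𝓝 0) (𝓝 (a 0)) := by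
  have hC : 0 ≤ C := by simpa using (abs_nonneg _).trans (ha 0)
  have hcont : ContinuousOn (fun w ↦ ∑' n, a n * w ^ n) (Metric.ball 0 (1 / (2 * R))) := by
    refine continuousOn_tsum (fun n ↦ (continuous_const.mul (continuous_pow n)).continuousOn)
      (summable_geometric_two.mul_left C) fun n w hw ↦ ?_
    rw [mem_ball_zero_iff, Real.norm_eq_abs, lt_div_iff₀ (by positivity)] at hw
    rw [Real.norm_eq_abs, abs_mul, abs_pow]
    calc |a n| * |w| ^ n ≤ C * R ^ n * |w| ^ n := by gcongr; exact ha n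
      _ = C * (|w| * R) ^ n := by ring
      _ ≤ C * (1 / 2) ^ n := by gcongr; linarith
  have h0 : ∑' n, a n * (0 : ℝ) ^ n = a 0 := by
    rw [tsum_eq_single 0 fun n hn ↦ by simp [hn]]
    simp
  simpa [h0] using (hcont.continuousAt (Metric.ball_mem_nhds 0 (by positivity))).tendsto

theorem neg_one_pow_mul_bernoulli_div_factorial_mul_fwdDiff_iter_pow_self (k : ℕ) (c : ℝ) :
    (-1) ^ k * ((bernoulli (k + 1) / (k + 1)! : ℝ) * Δ_[1] ^[k] (fun x ↦ x ^ k) c) =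
      -(bernoulli' (k + 1) : ℝ) / (k + 1) := by
  simp only [fwdDiff_iter_eq_factorial, Pi.natCast_apply, bernoulli'_eq_bernoulli, factorial_succ]
  push_cast
  field_simp
  ring

theorem tsum_pnat_exp_div_sub_principalPart_eq_tsum {z c : ℝ} {k : ℕ} (hz : z < 0) (hc : 0 < c)
    (hzc : -z * (k + c) < 1 / 2) :
    (∑' m : ℕ+, Real.exp (z * m * c) * (1 - Real.exp (z * m)) ^ k) / (-z) ^ k -
        (∑ l ∈ range (k + 1), (k.choose l : ℝ) * (-1) ^ (l + k + 1) / (l + c)) / z ^ (k + 1) =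
      (-1) ^ k * ∑' n, (bernoulli (n + k + 1) / (n + k + 1)! : ℝ) *
        Δ_[1] ^[k] (fun x ↦ x ^ (n + k)) c * (-z) ^ n := by
  have hprincipal : ∑ l ∈ range (k + 1), (k.choose l : ℝ) * (-1) ^ (l + k + 1) / (l + c) =
      -Δ_[1] ^[k] (fun x ↦ x⁻¹) c := by
    rw [fwdDiff_iter_eq_sum_choose_mul_neg_one_pow, ← sum_neg_distrib]
    exact sum_congr rfl fun l _ ↦ by ring
  have hregular : Δ_[1] ^[k] (fun x ↦ (Real.exp (-z * x) - 1)⁻¹ - (-z * x)⁻¹) c =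
      Δ_[1] ^[k] (fun x ↦ (Real.exp (-z * x) - 1)⁻¹) c -
        (-z)⁻¹ * Δ_[1] ^[k] (fun x ↦ x⁻¹) c := by
    have : (fun x ↦ (Real.exp (-z * x) - 1)⁻¹ - (-z * x)⁻¹) =
        (fun x ↦ (Real.exp (-z * x) - 1)⁻¹) - (-z)⁻¹ • fun x ↦ x⁻¹ := by
      ext x
      simp [mul_comm]
    rw [this, fwdDiff_iter_sub, fwdDiff_iter_const_smul]
    rfl
  have hz₀ : z ≠ 0 := hz.ne
  rw [tsum_pnat_exp_mul_mul_one_sub_exp_pow hz hc, hprincipal,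
    (hasSum_fwdDiff_iter_inv_exp_sub_one_sub_inv_div_pow (neg_pos.mpr hz) hc hzc).tsum_eq,
    hregular, neg_pow z, pow_succ]
  field_simp

/-- The constant coefficient of the Laurent expansion at `z = 0` of
`ψ^{(t)}(y_{-k})(z) = (-z)^{-k} ∑_{m>0} e^{zkmt}(1-e^{zm})^k`
equals `-B_{k+1}/(k+1)`, independently of `t > 0`: subtracting the single
principal part term `C⁰ₖ(t) z^{-k-1}` and letting `z → 0⁻` yields
`-B_{k+1}/(k+1)`. -/
theorem psi_z0_coefficient (k : ℕ) (hk : 0 < k) (t : ℝ) (ht : 0 < t) :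
    Filter.Tendsto
      (fun z : ℝ =>
        (∑' m : ℕ+, Real.exp (z * k * m * t) * (1 - Real.exp (z * m)) ^ k) /
            (-z) ^ k -
          (∑ l ∈ Finset.range (k + 1),
              (Nat.choose k l : ℝ) * (-1) ^ (l + k + 1) / ((l : ℝ) + k * t)) /
            z ^ (k + 1))
      (nhdsWithin (0 : ℝ) (Set.Iio 0))
      (nhds (-(bernoulli' (k + 1) : ℝ) / (k + 1))) := by
  have hc : (0 : ℝ) < k * t := by positivity
  have hlim := tendsto_tsum_mul_pow_nhds_zero (by positivity : (0 : ℝ) < 2 * (k + k * t))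
    (abs_bernoulli_mul_fwdDiff_iter_pow_le hc.le k)
  simp only [zero_add] at hlim
  have hneg : Tendsto (fun z : ℝ ↦ -z) (𝓝[<] 0) (𝓝 0) :=
    (continuous_neg.tendsto' 0 0 neg_zero).mono_left nhdsWithin_le_nhds
  have hδ : -1 / (2 * (k + k * t)) < (0 : ℝ) :=
    div_neg_of_neg_of_pos (by norm_num) (by positivity)
  rw [← neg_one_pow_mul_bernoulli_div_factorial_mul_fwdDiff_iter_pow_self k (k * t)]
  refine ((hlim.comp hneg).const_mul _).congr' (eventually_of_mem (Ioo_mem_nhdsLT hδ) ?_)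
  rintro z ⟨hz₁, hz⟩
  have hzc : -z * (k + k * t) < 1 / 2 := by
    rw [div_lt_iff₀ (by positivity)] at hz₁
    linarith
  have hsum : ∑' m : ℕ+, Real.exp (z * k * m * t) * (1 - Real.exp (z * m)) ^ k =
      ∑' m : ℕ+, Real.exp (z * m * (k * t)) * (1 - Real.exp (z * m)) ^ k :=
    tsum_congr fun m ↦ by ring_nf
  simp only [Function.comp_apply, hsum]
  exact (tsum_pnat_exp_div_sub_principalPart_eq_tsum hz hc hzc).symm
end
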